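/- Let E and F be nonzero vector bundles on a smooth projective curve X of genus g with μ(E) ≠ g. If all cohomology groups of pr₁*E ⊗ O_{X×X}(-Δ) ⊗ pr₂*F on X × X vanish, then μ(F) = g + g/(μ(E) - g). -/

import Mathlib

/-!
If `pr₁*E ⊗ O(-Δ) ⊗ pr₂*F` has no cohomology, the sequence
`0 → E ⊠ F(-Δ) → E ⊠ F → E ⊗ F → 0` and Künneth give `χ(E ⊗ F) = χ(E) χ(F)`.
With Riemann–Roch `χ(G) = rk G (μ(G) + 1 - g)` and `μ(E ⊗ F) = μ(E) + μ(F)`, this says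
`μ(E) + μ(F) + 1 - g = (μ(E) + 1 - g)(μ(F) + 1 - g)`, i.e. `(μ(E) - g)(μ(F) - g) = g`.
-/

/-- An abstract model of the geometry of a smooth projective curve `X` of genus `g`
over an algebraically closed field: a type of coherent sheaves together with
rank, degree, cohomology dimensions, subsheaf and short-exact-sequence relations,
tensor products, duals, the canonical bundle, trivial bundles, direct sums,
global generation, the kernel of the evaluation map `H⁰(E) ⊗ O_X → E`,
the Fourier functor `F¹₊(E) = R¹pr₂*(O_{X×X}(Δ) ⊗ pr₁*E)`, and the cohomology
dimensions of `pr₁*E ⊗ O_{X×X}(-Δ) ⊗ pr₂*F` on `X × X`,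
satisfying the standard compatibilities (Riemann–Roch, Serre duality,
Künneth/long-exact-sequence estimates, etc.). -/
structure AlgCurve where
  g : ℕ
  Sheaf : Type
  rk : Sheaf → ℕ
  deg : Sheaf → ℤ
  h0 : Sheaf → ℕ
  h1 : Sheaf → ℕ
  /-- `Sub G E` : `G` is a subsheaf of `E`. -/
  Sub : Sheaf → Sheaf → Prop
  /-- `SES A B C` : there is a short exact sequence `0 → A → B → C → 0`. -/
  SES : Sheaf → Sheaf → Sheaf → Prop
  tensor : Sheaf → Sheaf → Sheaf
  dual : Sheaf → Sheaf
  /-- the canonical bundle `ω_X` -/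
  omega : Sheaf
  /-- `triv n` is the trivial bundle `O_X^{⊕ n}` -/
  triv : ℕ → Sheaf
  /-- direct sum of sheaves -/
  dsum : Sheaf → Sheaf → Sheaf
  /-- `gg E` : `E` is globally generated -/
  gg : Sheaf → Prop
  /-- the kernel of the evaluation map `H⁰(E) ⊗ O_X → E` -/
  evKer : Sheaf → Sheaf
  /-- `F¹₊(E) = R¹pr₂*(O_{X×X}(Δ) ⊗ pr₁*E)` -/
  Fplus1 : Sheaf → Sheaf
  /-- `hBoxMinus E F i = dim H^i(X×X, pr₁*E ⊗ O_{X×X}(-Δ) ⊗ pr₂*F)` -/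
  hBoxMinus : Sheaf → Sheaf → ℕ → ℕ
  rk_tensor : ∀ E F, rk (tensor E F) = rk E * rk F
  deg_tensor : ∀ E F, deg (tensor E F) = rk F * deg E + rk E * deg F
  rk_dual : ∀ E, rk (dual E) = rk E
  deg_dual : ∀ E, deg (dual E) = - deg E
  rk_omega : rk omega = 1
  deg_omega : deg omega = 2 * (g : ℤ) - 2
  rk_triv : ∀ n, rk (triv n) = n
  deg_triv : ∀ n, deg (triv n) = 0
  h0_triv : ∀ n, h0 (triv n) = n
  rk_dsum : ∀ E F, rk (dsum E F) = rk E + rk F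
  deg_dsum : ∀ E F, deg (dsum E F) = deg E + deg F
  h0_dsum : ∀ E F, h0 (dsum E F) = h0 E + h0 F
  /-- Riemann–Roch: `χ(E) = deg E + rk E (1 - g)` -/
  riemannRoch : ∀ E, (h0 E : ℤ) - h1 E = deg E + rk E * (1 - (g : ℤ))
  /-- Serre duality: `h¹(E) = h⁰(E^∨ ⊗ ω_X)` -/
  serre : ∀ E, h1 E = h0 (tensor (dual E) omega)
  h0_mono : ∀ E F, Sub E F → h0 E ≤ h0 F
  sub_tensor : ∀ G E F, Sub G E → Sub (tensor G F) (tensor E F)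
  ses_rk : ∀ A B C, SES A B C → rk B = rk A + rk C
  ses_deg : ∀ A B C, SES A B C → deg B = deg A + deg C
  ses_h0 : ∀ A B C, SES A B C → h0 B ≤ h0 A + h0 C
  ses_sub : ∀ A B C, SES A B C → Sub A B
  /-- for globally generated `E`: `0 → K → H⁰(E) ⊗ O_X → E → 0` -/
  evKer_ses : ∀ E, gg E → SES (evKer E) (triv (h0 E)) E
  boxMinus_le0 : ∀ E F, hBoxMinus E F 0 ≤ h0 E * h0 F
  boxMinus_le1 : ∀ E F,
    hBoxMinus E F 1 ≤ h0 E * h1 F + h1 E * h0 F + h0 (tensor E F)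
  boxMinus_le2 : ∀ E F, hBoxMinus E F 2 ≤ h1 E * h1 F + h1 (tensor E F)
  boxMinus_hi : ∀ E F i, 2 < i → hBoxMinus E F i = 0
  boxMinus_euler : ∀ E F,
    ((hBoxMinus E F 0 : ℤ) - hBoxMinus E F 1 + hBoxMinus E F 2)
      = ((h0 E : ℤ) - h1 E) * ((h0 F : ℤ) - h1 F)
        - ((h0 (tensor E F) : ℤ) - h1 (tensor E F))

namespace AlgCurve

variable (C : AlgCurve)

/-- the slope `μ(E) = deg(E)/rk(E)` -/
def slope (E : C.Sheaf) : ℚ := (C.deg E : ℚ) / (C.rk E : ℚ)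

/-- `E` is semistable: every nonzero subsheaf `G ⊆ E` has `μ(G) ≤ μ(E)`. -/
def Semistable (E : C.Sheaf) : Prop :=
  ∀ G, C.Sub G E → 0 < C.rk G → C.slope G ≤ C.slope E

/-- `E` is stable: every proper nonzero subsheaf `G ⊊ E` has `μ(G) < μ(E)`. -/
def Stable (E : C.Sheaf) : Prop :=
  ∀ G, C.Sub G E → 0 < C.rk G → G ≠ E → C.slope G < C.slope E

end AlgCurve

namespace AlgCurve

variable (C : AlgCurve)

def chi (E : C.Sheaf) : ℤ := C.h0 E - C.h1 E

theorem chi_eq_rk_mul_slope (E : C.Sheaf) (hE : 0 < C.rk E) :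
    (C.chi E : ℚ) = C.rk E * (C.slope E + 1 - C.g) := by
  have hr : (C.rk E : ℚ) ≠ 0 := by positivity
  unfold chi slope
  rw [C.riemannRoch E]
  push_cast
  field_simp
  ring

theorem slope_tensor (E F : C.Sheaf) (hE : 0 < C.rk E) (hF : 0 < C.rk F) :
    C.slope (C.tensor E F) = C.slope E + C.slope F := by
  have hr : (C.rk E : ℚ) ≠ 0 := by positivity
  have hs : (C.rk F : ℚ) ≠ 0 := by positivity
  unfold slope
  rw [C.rk_tensor, C.deg_tensor]
  push_cast
  field_simp

theorem chi_tensor_of_hBoxMinus_eq_zero (E F : C.Sheaf) (h : ∀ i, C.hBoxMinus E F i = 0) :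
    C.chi (C.tensor E F) = C.chi E * C.chi F := by
  have heuler := C.boxMinus_euler E F
  simp only [h, Nat.cast_zero, sub_zero, add_zero] at heuler
  unfold chi
  linarith

theorem slope_sub_genus_mul_slope_sub_genus_of_hBoxMinus_eq_zero (E F : C.Sheaf)
    (hE : 0 < C.rk E) (hF : 0 < C.rk F) (h : ∀ i, C.hBoxMinus E F i = 0) :
    (C.slope E - C.g) * (C.slope F - C.g) = C.g := by
  have hχ : (C.chi (C.tensor E F) : ℚ) = C.chi E * C.chi F := by
    exact_mod_cast C.chi_tensor_of_hBoxMinus_eq_zero E F h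
  rw [C.chi_eq_rk_mul_slope _ (by rw [C.rk_tensor]; positivity), C.chi_eq_rk_mul_slope E hE,
    C.chi_eq_rk_mul_slope F hF, C.slope_tensor E F hE hF, C.rk_tensor] at hχ
  have hrs : (C.rk E : ℚ) * C.rk F ≠ 0 := by positivity
  apply mul_left_cancel₀ hrs
  push_cast at hχ
  linear_combination -hχ

end AlgCurve

/-- If `E ⊥_{-Δ} F` (all cohomology of `pr₁*E ⊗ O(-Δ) ⊗ pr₂*F` on `X × X` vanishes)
with `E`, `F` nonzero and `μ(E) ≠ g`, then `μ(F) = g + g/(μ(E) - g)`. -/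
theorem stmt2 (C : AlgCurve) (E F : C.Sheaf) (hE : 0 < C.rk E) (hF : 0 < C.rk F)
    (hne : C.slope E ≠ (C.g : ℚ))
    (horth : ∀ i, C.hBoxMinus E F i = 0) :
    C.slope F = C.g + C.g / (C.slope E - C.g) := by
  have hprod := C.slope_sub_genus_mul_slope_sub_genus_of_hBoxMinus_eq_zero E F hE hF horth
  have hquot : C.slope F - C.g = C.g / (C.slope E - C.g) := by
    rw [eq_div_iff (sub_ne_zero.mpr hne), mul_comm, hprod]
  linarith
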